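/- Let d, n ∈ ℕ, let m ∈ ℕ with m ≥ 1, and let x₁, …, x_n ∈ [0,1]^d. Then there exist monotone functions f₋, f₊ : [0,1]^d → [0,1] with f₋ ≤ f₊ pointwise, f₋(x_i) = f₊(x_i) for all i = 1, …, n, and ∫_{[0,1]^d} (f₊ − f₋) dλ^d ≥ (1 − n · m^{−d}) / (d(m−1)+1). -/

import Mathlib

open MeasureTheory Set

/-!
Cut `[0,1]^d` into the `m^d` grid cells and let `ℓ y ∈ {0, …, d(m-1)}` be the sum of the integer
coordinates of the grid cell containing `y`. Both `ℓ / D` and `(ℓ + 1_{y ∉ S}) / D`, with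
`D = d(m-1)+1` and `S` the union of the cells containing a sample point, are monotone: if
`y ≤ z` and `ℓ y = ℓ z`, then `y` and `z` lie in the same cell. The two functions agree on the
samples and differ by `1/D` outside `S`, whose volume is at most `n m^{-d}`.
-/

section Staircase

variable {α : Type*} (ℓ : α → ℕ) (S : Set α) (L : ℕ)

noncomputable def stairLower (y : α) : ℝ := ℓ y / (L + 1)

noncomputable def stairUpper (y : α) : ℝ := (ℓ y + Sᶜ.indicator 1 y) / (L + 1)

variable {ℓ S L}

lemma indicator_one_mem_Icc (S : Set α) (y : α) : Sᶜ.indicator (1 : α → ℝ) y ∈ Icc 0 1 :=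
  ⟨indicator_nonneg (fun _ _ => zero_le_one) y,
    indicator_apply_le' (fun _ => le_rfl) (fun _ => zero_le_one)⟩

lemma stairLower_mem_Icc (hℓ : ∀ y, ℓ y ≤ L) (y : α) : stairLower ℓ L y ∈ Icc 0 1 := by
  have : (ℓ y : ℝ) ≤ L := by exact_mod_cast hℓ y
  exact ⟨by unfold stairLower; positivity, (div_le_one (by positivity)).2 (by linarith)⟩

lemma stairUpper_mem_Icc (hℓ : ∀ y, ℓ y ≤ L) (y : α) : stairUpper ℓ S L y ∈ Icc 0 1 := by
  have : (ℓ y : ℝ) ≤ L := by exact_mod_cast hℓ y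
  obtain ⟨h0, h1⟩ := indicator_one_mem_Icc S y
  exact ⟨by unfold stairUpper; positivity, (div_le_one (by positivity)).2 (by linarith)⟩

lemma stairLower_le_stairUpper (y : α) : stairLower ℓ L y ≤ stairUpper ℓ S L y := by
  unfold stairLower stairUpper
  gcongr
  exact le_add_of_nonneg_right (indicator_one_mem_Icc S y).1

lemma stairUpper_eq_stairLower_of_mem {y : α} (hy : y ∈ S) :
    stairUpper ℓ S L y = stairLower ℓ L y := by
  simp [stairUpper, stairLower, hy]

lemma stairUpper_sub_stairLower (y : α) :
    stairUpper ℓ S L y - stairLower ℓ L y = Sᶜ.indicator 1 y / (L + 1) := by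
  simp only [stairUpper, stairLower, add_div, add_sub_cancel_left]

variable [Preorder α]

lemma stairLower_monotone (hℓ : Monotone ℓ) : Monotone (stairLower ℓ L) := fun _ _ h => by
  unfold stairLower
  gcongr
  exact hℓ h

/-- The jump of `1` on `Sᶜ` can only break monotonicity between points of the same level. -/
lemma stairUpper_monotone (hℓ : Monotone ℓ)
    (hS : ∀ ⦃y z⦄, y ≤ z → ℓ y = ℓ z → z ∈ S → y ∈ S) : Monotone (stairUpper ℓ S L) := by
  intro y z hyz
  unfold stairUpper
  gcongr ?_ / _
  obtain ⟨-, hy1⟩ := indicator_one_mem_Icc S y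
  obtain ⟨hz0, -⟩ := indicator_one_mem_Icc S z
  rcases (hℓ hyz).eq_or_lt with heq | hlt
  · by_cases hz : z ∈ S
    · simp [heq, hz, hS hyz heq hz]
    · simp [heq, hz, hy1]
  · have : (ℓ y : ℝ) + 1 ≤ ℓ z := by exact_mod_cast hlt
    linarith

end Staircase

noncomputable section Grid

-- Clamped at `m - 1` so that the right end `t = 1` falls into the last of the `m` cells.
def gridIndex (m : ℕ) (t : ℝ) : ℕ := min ⌊m * t⌋₊ (m - 1)

lemma gridIndex_mono (m : ℕ) : Monotone (gridIndex m) := fun _ _ h =>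
  min_le_min_right _ (Nat.floor_mono (mul_le_mul_of_nonneg_left h m.cast_nonneg))

lemma gridIndex_le (m : ℕ) (t : ℝ) : gridIndex m t ≤ m - 1 := min_le_right _ _

lemma measurable_gridIndex (m : ℕ) : Measurable (gridIndex m) :=
  (measurable_from_top (f := fun k : ℕ => min k (m - 1))).comp
    (Nat.measurable_floor.comp (measurable_const_mul (m : ℝ)))

lemma mem_Icc_gridIndex {m : ℕ} (hm : 1 ≤ m) {t : ℝ} (ht : t ∈ Icc 0 1) :
    t ∈ Icc ((gridIndex m t : ℝ) / m) ((gridIndex m t + 1) / m) := by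
  have hm' : (0 : ℝ) < m := by exact_mod_cast hm
  rw [mem_Icc, div_le_iff₀ hm', le_div_iff₀ hm']
  constructor
  · calc (gridIndex m t : ℝ) ≤ ⌊m * t⌋₊ := by exact_mod_cast min_le_left _ _
      _ ≤ m * t := Nat.floor_le (mul_nonneg hm'.le ht.1)
      _ = t * m := mul_comm _ _
  · rcases le_total ⌊m * t⌋₊ (m - 1) with h | h
    · rw [gridIndex, min_eq_left h, mul_comm]
      exact (Nat.lt_floor_add_one _).le
    · rw [gridIndex, min_eq_right h, Nat.cast_sub hm, Nat.cast_one, sub_add_cancel]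
      exact mul_le_of_le_one_left hm'.le ht.2

variable {ι κ : Type*}

def gridCellIndex (m : ℕ) (y : ι → ℝ) : ι → ℕ := fun j => gridIndex m (y j)

lemma measurable_gridCellIndex (m : ℕ) : Measurable (gridCellIndex (ι := ι) m) :=
  measurable_pi_lambda _ fun j => (measurable_gridIndex m).comp (measurable_pi_apply j)

def gridCell (m : ℕ) (k : ι → ℕ) : Set (ι → ℝ) :=
  Icc (fun j => k j / m) (fun j => (k j + 1) / m)

lemma mem_gridCell_gridCellIndex {m : ℕ} (hm : 1 ≤ m) {y : ι → ℝ} (hy : y ∈ Icc 0 1) :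
    y ∈ gridCell m (gridCellIndex m y) :=
  ⟨fun j => (mem_Icc_gridIndex hm ⟨hy.1 j, hy.2 j⟩).1,
    fun j => (mem_Icc_gridIndex hm ⟨hy.1 j, hy.2 j⟩).2⟩

def sampledCells (m : ℕ) (x : κ → ι → ℝ) : Set (ι → ℝ) :=
  gridCellIndex m ⁻¹' range (gridCellIndex m ∘ x)

lemma mem_sampledCells (m : ℕ) (x : κ → ι → ℝ) (i : κ) : x i ∈ sampledCells m x :=
  ⟨i, rfl⟩

variable [Fintype ι]

def gridLevel (m : ℕ) (y : ι → ℝ) : ℕ := ∑ j, gridCellIndex m y j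

lemma gridLevel_mono (m : ℕ) : Monotone (gridLevel (ι := ι) m) := fun _ _ h =>
  Finset.sum_le_sum fun j _ => gridIndex_mono m (h j)

lemma gridLevel_le (m : ℕ) (y : ι → ℝ) : gridLevel m y ≤ Fintype.card ι * (m - 1) :=
  calc gridLevel m y ≤ ∑ _j : ι, (m - 1) := Finset.sum_le_sum fun j _ => gridIndex_le m (y j)
    _ = Fintype.card ι * (m - 1) := by simp

lemma gridCellIndex_eq_of_le_of_gridLevel_eq {m : ℕ} {y z : ι → ℝ} (hyz : y ≤ z)
    (h : gridLevel m y = gridLevel m z) : gridCellIndex m y = gridCellIndex m z :=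
  funext fun j => (Finset.sum_eq_sum_iff_of_le fun j _ => gridIndex_mono m (hyz j)).1 h j
    (Finset.mem_univ j)

lemma volume_real_gridCell (m : ℕ) (k : ι → ℕ) :
    volume.real (gridCell m k) = (1 / m : ℝ) ^ Fintype.card ι := by
  have hlen : ∀ j, ((k j : ℝ) + 1) / m - k j / m = 1 / m := fun j => by ring
  simp [gridCell, measureReal_def, Real.volume_Icc_pi, hlen]

lemma mem_sampledCells_of_le_of_gridLevel_eq {m : ℕ} {x : κ → ι → ℝ} {y z : ι → ℝ}
    (hyz : y ≤ z) (h : gridLevel m y = gridLevel m z) (hz : z ∈ sampledCells m x) :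
    y ∈ sampledCells m x := by
  rwa [sampledCells, mem_preimage, gridCellIndex_eq_of_le_of_gridLevel_eq hyz h]

variable [Fintype κ]

lemma measurableSet_sampledCells (m : ℕ) (x : κ → ι → ℝ) :
    MeasurableSet (sampledCells m x) :=
  measurable_gridCellIndex m (finite_range _).measurableSet

lemma volume_real_Icc_inter_sampledCells_le {m : ℕ} (hm : 1 ≤ m) (x : κ → ι → ℝ) :
    volume.real (Icc 0 1 ∩ sampledCells m x) ≤ Fintype.card κ / m ^ Fintype.card ι := by
  have hsub : Icc 0 1 ∩ sampledCells m x ⊆ ⋃ i, gridCell m (gridCellIndex m (x i)) := by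
    rintro y ⟨hy, i, hi⟩
    exact mem_iUnion.2 ⟨i, (congrArg (gridCell m) hi).symm ▸ mem_gridCell_gridCellIndex hm hy⟩
  calc volume.real (Icc 0 1 ∩ sampledCells m x)
      ≤ volume.real (⋃ i, gridCell m (gridCellIndex m (x i))) :=
        measureReal_mono hsub (isCompact_iUnion fun _ => isCompact_Icc).measure_lt_top.ne
    _ ≤ ∑ i, volume.real (gridCell m (gridCellIndex m (x i))) := measureReal_iUnion_fintype_le _
    _ = Fintype.card κ / m ^ Fintype.card ι := by
        simp [volume_real_gridCell, div_eq_mul_inv]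

lemma setIntegral_Icc_indicator_compl_one {S : Set (ι → ℝ)} (hS : MeasurableSet S) :
    ∫ y in Icc 0 1, Sᶜ.indicator 1 y = 1 - volume.real (Icc 0 1 ∩ S) := by
  have hvol : volume.real (Icc (0 : ι → ℝ) 1) = 1 := by
    simp [measureReal_def, Real.volume_Icc_pi]
  rw [integral_indicator_one hS.compl, measureReal_restrict_apply hS.compl,
    ← sdiff_eq_compl_inter, ← hvol,
    ← measureReal_sdiff_add_inter hS isCompact_Icc.measure_lt_top.ne, add_sub_cancel_right]

end Grid

theorem stmt12_general (d n m : ℕ) (hm : 1 ≤ m)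
    (x : Fin n → Fin d → ℝ) :
    ∃ fm fp : (Fin d → ℝ) → ℝ,
      (∀ y ∈ Set.Icc (0 : Fin d → ℝ) 1, fm y ∈ Set.Icc (0 : ℝ) 1) ∧
      (∀ y ∈ Set.Icc (0 : Fin d → ℝ) 1, fp y ∈ Set.Icc (0 : ℝ) 1) ∧
      (∀ y ∈ Set.Icc (0 : Fin d → ℝ) 1, ∀ z ∈ Set.Icc (0 : Fin d → ℝ) 1,
        y ≤ z → fm y ≤ fm z) ∧
      (∀ y ∈ Set.Icc (0 : Fin d → ℝ) 1, ∀ z ∈ Set.Icc (0 : Fin d → ℝ) 1,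
        y ≤ z → fp y ≤ fp z) ∧
      (∀ y ∈ Set.Icc (0 : Fin d → ℝ) 1, fm y ≤ fp y) ∧
      (∀ i, fm (x i) = fp (x i)) ∧
      (1 - (n : ℝ) / m ^ d) / ((d : ℝ) * ((m : ℝ) - 1) + 1) ≤
        ∫ y in Set.Icc (0 : Fin d → ℝ) 1, (fp y - fm y) := by
  have hlevel (y : Fin d → ℝ) : gridLevel m y ≤ d * (m - 1) := by
    simpa using gridLevel_le m y
  have hD : ((d * (m - 1) : ℕ) : ℝ) + 1 = d * ((m : ℝ) - 1) + 1 := by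
    push_cast [Nat.cast_sub hm]
    ring
  have hsampled : volume.real (Icc 0 1 ∩ sampledCells m x) ≤ n / m ^ d := by
    simpa using volume_real_Icc_inter_sampledCells_le hm x
  refine ⟨stairLower (gridLevel m) (d * (m - 1)),
    stairUpper (gridLevel m) (sampledCells m x) (d * (m - 1)),
    fun y _ => stairLower_mem_Icc hlevel y, fun y _ => stairUpper_mem_Icc hlevel y,
    fun y _ z _ h => stairLower_monotone (gridLevel_mono m) h,
    fun y _ z _ h => stairUpper_monotone (gridLevel_mono m)
      (fun _ _ => mem_sampledCells_of_le_of_gridLevel_eq) h,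
    fun y _ => stairLower_le_stairUpper y,
    fun i => (stairUpper_eq_stairLower_of_mem (mem_sampledCells m x i)).symm, ?_⟩
  simp_rw [stairUpper_sub_stairLower]
  rw [integral_div, setIntegral_Icc_indicator_compl_one (measurableSet_sampledCells m x), hD]
  gcongr
  linarith

theorem stmt12 (d n m : ℕ) (hd : 1 ≤ d) (hn : 1 ≤ n) (hm : 1 ≤ m)
    (x : Fin n → Fin d → ℝ) (hx : ∀ i, x i ∈ Set.Icc (0 : Fin d → ℝ) 1) :
    ∃ fm fp : (Fin d → ℝ) → ℝ,
      (∀ y ∈ Set.Icc (0 : Fin d → ℝ) 1, fm y ∈ Set.Icc (0 : ℝ) 1) ∧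
      (∀ y ∈ Set.Icc (0 : Fin d → ℝ) 1, fp y ∈ Set.Icc (0 : ℝ) 1) ∧
      (∀ y ∈ Set.Icc (0 : Fin d → ℝ) 1, ∀ z ∈ Set.Icc (0 : Fin d → ℝ) 1,
        y ≤ z → fm y ≤ fm z) ∧
      (∀ y ∈ Set.Icc (0 : Fin d → ℝ) 1, ∀ z ∈ Set.Icc (0 : Fin d → ℝ) 1,
        y ≤ z → fp y ≤ fp z) ∧
      (∀ y ∈ Set.Icc (0 : Fin d → ℝ) 1, fm y ≤ fp y) ∧
      (∀ i, fm (x i) = fp (x i)) ∧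
      (1 - (n : ℝ) / m ^ d) / ((d : ℝ) * ((m : ℝ) - 1) + 1) ≤
        ∫ y in Set.Icc (0 : Fin d → ℝ) 1, (fp y - fm y) :=
  stmt12_general d n m hm x
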